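/- Let V ⊆ K[G] be an S-module, v = Σ_{g∈G} λ_g·g ∈ V, and λ ∈ K. If T = {g ∈ G : λ_g = λ}, then the simple quantity Σ_{g∈T} g lies in V. -/

import Mathlib

/-!
Having equal coefficients at two points of a common part is a linear condition satisfied by the
simple quantity of every part, hence by every element of the S-module. So a level set `T` of such
an element is a union of parts, and its simple quantity is the sum of theirs.
-/

open Finset

namespace MonoidAlgebra

variable (K : Type*) {G : Type*} [Semiring K]

noncomputable def simpleQuantity (C : Finset G) : MonoidAlgebra K G :=
  ∑ g ∈ C, single g 1

variable {K} [DecidableEq G]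

theorem coeff_simpleQuantity (C : Finset G) (x : G) :
    (simpleQuantity K C).coeff x = if x ∈ C then 1 else 0 := by
  simp [simpleQuantity, coeff_sum, Finsupp.finsetSum_apply, coeff_single, Finsupp.single_apply]

theorem coeff_eq_of_mem_span_simpleQuantity_parts {s : Finset G} (P : Finpartition s)
    {v : MonoidAlgebra K G} (hv : v ∈ Submodule.span K (simpleQuantity K '' ↑P.parts))
    {C : Finset G} (hC : C ∈ P.parts) {x y : G} (hx : x ∈ C) (hy : y ∈ C) :
    v.coeff x = v.coeff y := by
  induction hv using Submodule.span_induction with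
  | mem w hw =>
    obtain ⟨D, hD, rfl⟩ := hw
    have hxy : x ∈ D ↔ y ∈ D :=
      ⟨fun hxD => P.eq_of_mem_parts hD hC hxD hx ▸ hy,
        fun hyD => P.eq_of_mem_parts hD hC hyD hy ▸ hx⟩
    simp only [coeff_simpleQuantity, hxy]
  | zero => rfl
  | add w w' _ _ hw hw' => simp only [coeff_add, Finsupp.add_apply, hw, hw']
  | smul a w _ hw => simp only [coeff_smul_apply, hw]

theorem simpleQuantity_mem_span_parts {s : Finset G} (P : Finpartition s) {T : Finset G}
    (hTs : T ⊆ s) (hT : ∀ C ∈ P.parts, ∀ x ∈ C, x ∈ T → C ⊆ T) :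
    simpleQuantity K T ∈ Submodule.span K (simpleQuantity K '' ↑P.parts) := by
  classical
  have hunion : T = (P.parts.filter (· ⊆ T)).biUnion id := by
    ext x
    simp only [mem_biUnion, mem_filter, id]
    refine ⟨fun hxT => ?_, fun ⟨C, ⟨_, hCT⟩, hxC⟩ => hCT hxC⟩
    obtain ⟨C, hC, hxC⟩ := P.exists_mem (hTs hxT)
    exact ⟨C, ⟨hC, hT C hC x hxC hxT⟩, hxC⟩
  have hsum : simpleQuantity K T = ∑ C ∈ P.parts.filter (· ⊆ T), simpleQuantity K C := by
    conv_lhs => rw [simpleQuantity, hunion]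
    exact sum_biUnion (P.disjoint.subset (filter_subset _ _))
  rw [hsum]
  exact Submodule.sum_mem _ fun C hC => Submodule.subset_span ⟨C, (mem_filter.1 hC).1, rfl⟩

end MonoidAlgebra

open MonoidAlgebra in
theorem stmt_2_general {K : Type*} [Field K] {G : Type*} [Fintype G] [DecidableEq G]
    (V : Submodule K (MonoidAlgebra K G)) (P : Finpartition (univ : Finset G))
    (hV : V = Submodule.span K
      ((fun C : Finset G => ∑ g ∈ C, MonoidAlgebra.single g (1 : K)) '' ↑P.parts))
    (v : MonoidAlgebra K G) (hv : v ∈ V) (lam : K)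
    (T : Finset G) (hT : ∀ g : G, g ∈ T ↔ v.coeff g = lam) :
    (∑ g ∈ T, MonoidAlgebra.single g (1 : K)) ∈ V := by
  subst hV
  refine simpleQuantity_mem_span_parts P (subset_univ T) fun C hC x hxC hxT y hyC => ?_
  rw [hT] at hxT ⊢
  exact (coeff_eq_of_mem_span_simpleQuantity_parts P hv hC hyC hxC).trans hxT

/-- the set of group elements whose coefficient in an element of an
S-module equals a fixed scalar has its simple quantity in the S-module. -/
theorem stmt_2 {K : Type*} [Field K] {G : Type*} [Group G] [Fintype G] [DecidableEq G]
    (V : Submodule K (MonoidAlgebra K G)) (P : Finpartition (univ : Finset G))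
    (hV : V = Submodule.span K
      ((fun C : Finset G => ∑ g ∈ C, MonoidAlgebra.single g (1 : K)) '' ↑P.parts))
    (v : MonoidAlgebra K G) (hv : v ∈ V) (lam : K)
    (T : Finset G) (hT : ∀ g : G, g ∈ T ↔ v.coeff g = lam) :
    (∑ g ∈ T, MonoidAlgebra.single g (1 : K)) ∈ V :=
  stmt_2_general V P hV v hv lam T hT
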